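/- Sturm oscillation base case: the n-th eigenfunction of -f'' + Vf = λf on [0,L] with Dirichlet boundary conditions f(0) = f(L) = 0 has exactly n-1 zeros in the open interval (0,L), where eigenvalues are listed in increasing order λ_1 < λ_2 < .... -/

import Mathlib

open Set

/-- `f` is an eigenfunction of `-f'' + V f = μ f` on `[0, L]` with Dirichlet
boundary conditions `f(0) = f(L) = 0`. -/
def DirichletEigenfunction (L : ℝ) (V : ℝ → ℝ) (μ : ℝ) (f : ℝ → ℝ) : Prop :=
  ContDiff ℝ 2 f ∧
  (∀ x ∈ Icc 0 L, -(deriv (deriv f) x) + V x * f x = μ * f x) ∧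
  f 0 = 0 ∧ f L = 0 ∧
  ∃ x ∈ Icc 0 L, f x ≠ 0

/-!
Prüfer substitution. A solution of `y'' = (V - μ) y` with `y 0 = 0` is written `y = r sin θ_μ`,
`y' = r cos θ_μ` with `r > 0`, where the angle solves a first-order equation with `θ_μ 0 = 0`.
At a multiple of `π` the angle has derivative `1`, so `θ_μ` crosses each level `k π` exactly
once, upwards. Hence `μ` is an eigenvalue iff `θ_μ L ∈ π ℕ₊`, and the zeros of the eigenfunction
in `(0, L)` are the crossings of the levels `k π < θ_μ L`. As `μ ↦ θ_μ L` is continuous, strictly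
increasing and below `π` for `μ ≪ 0`, the intermediate value theorem forces `θ_μ L = n π` at the
`n`-th eigenvalue, whose eigenfunction therefore has `n - 1` zeros.
-/

open Filter Topology Real
open scoped NNReal

theorem HasDerivAt.eventually_nhdsLT_lt {g : ℝ → ℝ} {g' x : ℝ} (h : HasDerivAt g g' x)
    (hg' : 0 < g') : ∀ᶠ u in 𝓝[<] x, g u < g x := by
  have hslope : ∀ᶠ u in 𝓝[<] x, 0 < slope g x u :=
    ((hasDerivAt_iff_tendsto_slope.1 h).eventually (eventually_gt_nhds hg')).filter_mono
      (nhdsLT_le_nhdsNE x)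
  filter_upwards [hslope, self_mem_nhdsWithin] with u hu hux
  rwa [slope_comm, slope_pos_iff hux] at hu

theorem ODE_subsolution_le_supersolution {v : ℝ → ℝ → ℝ} {K : ℝ≥0} {f f' g g' : ℝ → ℝ}
    {a b : ℝ} (hv : ∀ t ∈ Ico a b, LipschitzWith K (v t))
    (hf : ContinuousOn f (Icc a b)) (hf' : ∀ t ∈ Ico a b, HasDerivWithinAt f (f' t) (Ici t) t)
    (hg : ContinuousOn g (Icc a b)) (hg' : ∀ t ∈ Ico a b, HasDerivWithinAt g (g' t) (Ici t) t)
    (hfv : ∀ t ∈ Ico a b, f' t ≤ v t (f t)) (hvg : ∀ t ∈ Ico a b, v t (g t) ≤ g' t)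
    (ha : f a ≤ g a) : ∀ t ∈ Icc a b, f t ≤ g t := by
  intro t ht
  set E : ℝ → ℝ := fun u => exp ((K + 1) * (u - a))
  have hE : ∀ u, HasDerivAt E ((K + 1) * E u) u := fun u => by
    simpa [E, mul_comm] using ((((hasDerivAt_id u).sub_const a).const_mul (K + 1 : ℝ)).exp)
  -- compare `f` with `g + ε E`, which is a strict supersolution since `E` outgrows `K E`
  have hε : ∀ ε > 0, f t ≤ g t + ε * E t := fun ε hε => by
    refine image_le_of_deriv_right_lt_deriv_boundary' (B := fun u => g u + ε * E u)
      (B' := fun u => g' u + ε * ((K + 1) * E u)) hf hf' ?_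
      (hg.add (continuous_const.mul (by fun_prop)).continuousOn)
      (fun u hu => (hg' u hu).add ((hE u).const_mul ε).hasDerivWithinAt) ?_ ht
    · have : 0 < ε * E a := mul_pos hε (exp_pos _)
      linarith
    · intro u hu hfu
      have hlip : v u (f u) ≤ v u (g u) + K * |f u - g u| := by
        have := (hv u hu).dist_le_mul (f u) (g u)
        rw [Real.dist_eq, Real.dist_eq] at this
        linarith [le_abs_self (v u (f u) - v u (g u))]
      have hfg : |f u - g u| = ε * E u := by
        rw [hfu, add_sub_cancel_left, abs_of_pos (mul_pos hε (exp_pos _))]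
      have : 0 < ε * E u := mul_pos hε (exp_pos _)
      nlinarith [hfv u hu, hvg u hu]
  refine le_of_forall_pos_le_add fun δ hδ => ?_
  have hEt : 0 < E t := exp_pos _
  simpa only [div_mul_cancel₀ _ hEt.ne'] using hε (δ / E t) (div_pos hδ hEt)

theorem exists_isIntegralCurve_of_lipschitzWith {E : Type*} [NormedAddCommGroup E]
    [NormedSpace ℝ E] [CompleteSpace E] {v : ℝ → E → E} {K C : ℝ≥0}
    (hv : ∀ t, LipschitzWith K (v t)) (hcont : ∀ x, Continuous fun t => v t x)
    (hC : ∀ t x, ‖v t x‖ ≤ C) (t₀ : ℝ) (x₀ : E) :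
    ∃ γ : ℝ → E, γ t₀ = x₀ ∧ IsIntegralCurve γ v := by
  set J : ℕ → Set ℝ := fun n => Ioo (t₀ - (n + 1)) (t₀ + (n + 1))
  have hJ₀ : ∀ n, t₀ ∈ J n := fun n => ⟨by linarith [n.cast_nonneg (α := ℝ)],
    by linarith [n.cast_nonneg (α := ℝ)]⟩
  have hloc : ∀ n : ℕ, ∃ γ : ℝ → E, γ t₀ = x₀ ∧ ∀ t ∈ J n, HasDerivAt γ (v t (γ t)) t := by
    intro n
    have hpl : IsPicardLindelof v (tmin := t₀ - (n + 1 : ℝ≥0)) (tmax := t₀ + (n + 1 : ℝ≥0))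
        ⟨t₀, by simp; positivity⟩ x₀ (C * (n + 1)) 0 C K :=
      { lipschitzOnWith := fun t _ => (hv t).lipschitzOnWith
        continuousOn := fun x _ => (hcont x).continuousOn
        norm_le := fun t _ x _ => hC t x
        mul_max_le := by simp }
    obtain ⟨γ, hγ₀, hγ⟩ := hpl.exists_eq_forall_mem_Icc_hasDerivWithinAt₀
    push_cast at hγ
    exact ⟨γ, hγ₀, fun t ht => (hγ t (Ioo_subset_Icc_self ht)).hasDerivAt (Icc_mem_nhds ht.1 ht.2)⟩
  choose γ hγ₀ hγ using hloc
  have hagree : ∀ m n s, s ∈ J m → s ∈ J n → γ m s = γ n s := by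
    have hle : ∀ m n, m ≤ n → EqOn (γ m) (γ n) (J m) := fun m n hmn => by
      have hmn' : (m : ℝ) ≤ n := Nat.cast_le.2 hmn
      have hJ : J m ⊆ J n := Ioo_subset_Ioo (by linarith) (by linarith)
      exact ODE_solution_unique_of_mem_Ioo (s := fun _ => univ)
        (fun t _ => (hv t).lipschitzOnWith) (hJ₀ m) (fun t ht => ⟨hγ m t ht, trivial⟩)
        (fun t ht => ⟨hγ n t (hJ ht), trivial⟩) ((hγ₀ m).trans (hγ₀ n).symm)
    intro m n s hm hn
    rcases le_total m n with h | h
    exacts [hle m n h hm, (hle n m h hn).symm]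
  set N : ℝ → ℕ := fun t => ⌈|t - t₀|⌉₊
  have hN : ∀ t, t ∈ J (N t) := fun t => by
    have := abs_lt.1 ((Nat.le_ceil |t - t₀|).trans_lt (lt_add_one (N t : ℝ)))
    exact ⟨by linarith, by linarith⟩
  refine ⟨fun t => γ (N t) t, hγ₀ _, fun t => ?_⟩
  refine (hγ (N t) t (hN t)).congr_of_eventuallyEq ?_
  filter_upwards [isOpen_Ioo.mem_nhds (hN t)] with s hs using hagree _ _ s (hN s) hs

theorem ContinuousOn.exists_continuous_extension_of_Icc {V : ℝ → ℝ} {a b : ℝ} (hab : a ≤ b)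
    (hV : ContinuousOn V (Icc a b)) :
    ∃ W : ℝ → ℝ, Continuous W ∧ EqOn W V (Icc a b) ∧ ∃ M : ℝ≥0, ∀ t, |W t| ≤ M := by
  obtain ⟨M, hM⟩ := isCompact_Icc.exists_bound_of_continuousOn hV
  refine ⟨fun t => V (projIcc a b hab t),
    hV.comp_continuous (continuous_subtype_val.comp continuous_projIcc) (fun t => Subtype.prop _),
    fun t ht => by simp [projIcc_of_mem hab ht], M.toNNReal, fun t => ?_⟩
  exact (hM _ (Subtype.prop _)).trans (le_coe_toNNReal M)

theorem Real.exists_nat_eq_mul_pi_of_sin_eq_zero {x : ℝ} (hsin : sin x = 0) (hx : 0 < x) :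
    ∃ m : ℕ, 1 ≤ m ∧ x = m * π := by
  obtain ⟨j, rfl⟩ := Real.sin_eq_zero_iff.1 hsin
  have hj : 0 < j := by exact_mod_cast (pos_of_mul_pos_left hx pi_pos.le)
  refine ⟨j.toNat, by omega, ?_⟩
  have hcast : ((j.toNat : ℕ) : ℝ) = j := by exact_mod_cast Int.toNat_of_nonneg hj.le
  rw [hcast]

theorem eqOn_of_deriv_deriv_eq_mul {q f g : ℝ → ℝ} {a b : ℝ} (hq : ContinuousOn q (Icc a b))
    (hf : ContDiff ℝ 2 f) (hg : ContDiff ℝ 2 g)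
    (hfq : ∀ x ∈ Icc a b, deriv (deriv f) x = q x * f x)
    (hgq : ∀ x ∈ Icc a b, deriv (deriv g) x = q x * g x)
    (ha : f a = g a) (ha' : deriv f a = deriv g a) : EqOn f g (Icc a b) := by
  have hf₁ := hf.differentiable two_ne_zero
  have hg₁ := hg.differentiable two_ne_zero
  have hf₂ := hf.differentiable_deriv_two
  have hg₂ := hg.differentiable_deriv_two
  obtain ⟨K, hK⟩ := isCompact_Icc.exists_bound_of_continuousOn hq
  -- Grönwall for the first-order system satisfied by `(f - g, f' - g')`
  have hsys := eq_zero_of_abs_deriv_le_mul_abs_self_of_eq_zero_right (K := 1 + K) (a := a) (b := b)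
    (f := fun x => (f x - g x, deriv f x - deriv g x))
    (f' := fun x => (deriv f x - deriv g x, deriv (deriv f) x - deriv (deriv g) x))
    ((hf₁.continuous.sub hg₁.continuous).prodMk (hf₂.continuous.sub hg₂.continuous)).continuousOn
    (fun x _ => (((hf₁ x).hasDerivAt.sub (hg₁ x).hasDerivAt).prodMk
      ((hf₂ x).hasDerivAt.sub (hg₂ x).hasDerivAt)).hasDerivWithinAt)
    (by simp [ha, ha']) (fun x hx => by
      have hKx : |q x| ≤ K := by simpa using hK x (Ico_subset_Icc_self hx)
      have hK0 : 0 ≤ K := (abs_nonneg _).trans hKx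
      simp only [Prod.norm_def, Real.norm_eq_abs, hfq x (Ico_subset_Icc_self hx),
        hgq x (Ico_subset_Icc_self hx), ← mul_sub, abs_mul]
      set u := |f x - g x|
      set v := |deriv f x - deriv g x|
      refine max_le ?_ ?_
      · nlinarith [le_max_right u v, abs_nonneg (deriv f x - deriv g x)]
      · nlinarith [le_max_left u v, abs_nonneg (f x - g x), abs_nonneg (deriv f x - deriv g x),
          mul_le_mul_of_nonneg_right hKx (abs_nonneg (f x - g x))])
  exact fun x hx => sub_eq_zero.1 (congrArg Prod.fst (hsys x hx))

theorem StrictMono.apply_eq_nat_mul_of_enumerates {Θ : ℝ → ℝ} {p : ℝ} (hp : 0 < p)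
    (hmono : StrictMono Θ) (hcont : Continuous Θ) (hlow : ∃ c, Θ c < p) {lam : ℕ → ℝ}
    (hlam : ∀ m n : ℕ, 1 ≤ m → m < n → lam m < lam n)
    (hev : ∀ n : ℕ, 1 ≤ n → ∃ m : ℕ, 1 ≤ m ∧ Θ (lam n) = m * p)
    (hall : ∀ c, (∃ m : ℕ, 1 ≤ m ∧ Θ c = m * p) → ∃ n : ℕ, 1 ≤ n ∧ lam n = c)
    {n : ℕ} (hn : 1 ≤ n) : Θ (lam n) = n * p := by
  have hord : ∀ i j : ℕ, 1 ≤ i → 1 ≤ j → (Θ (lam i) < Θ (lam j) ↔ i < j) :=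
    fun i j hi hj => StrictMonoOn.lt_iff_lt (f := Θ ∘ lam) (s := Ici 1)
      (fun i hi j hj hij => hmono (hlam i j hi hij)) hi hj
  have hlevel : ∀ i k : ℕ, 1 ≤ i → 1 ≤ k → k * p ≤ Θ (lam i) →
      ∃ j, 1 ≤ j ∧ j ≤ i ∧ Θ (lam j) = k * p := by
    intro i k hi hk hki
    obtain ⟨c₀, hc₀⟩ := hlow
    have hkp : p ≤ k * p := le_mul_of_one_le_left hp.le (by exact_mod_cast hk)
    have hc₀i : c₀ ≤ lam i := hmono.le_iff_le.1 (by linarith)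
    obtain ⟨c, -, hc⟩ := intermediate_value_Icc hc₀i hcont.continuousOn ⟨by linarith, hki⟩
    obtain ⟨j, hj, rfl⟩ := hall c ⟨k, hk, hc⟩
    exact ⟨j, hj, not_lt.1 fun hij => ((hord i j hi hj).2 hij).not_ge (hc ▸ hki), hc⟩
  induction n, hn using Nat.le_induction with
  | base =>
    obtain ⟨m, hm, hΘm⟩ := hev 1 le_rfl
    obtain ⟨j, hj, hj1, hΘj⟩ := hlevel 1 1 le_rfl le_rfl
      (hΘm ▸ mul_le_mul_of_nonneg_right (by exact_mod_cast hm) hp.le)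
    obtain rfl : j = 1 := by omega
    exact hΘj
  | succ n hn ih =>
    obtain ⟨m, hm, hΘm⟩ := hev (n + 1) (by omega)
    have hnm : n < m := by
      have : (n : ℝ) * p < m * p := ih ▸ hΘm ▸ (hord n (n + 1) hn (by omega)).2 (by omega)
      exact_mod_cast lt_of_mul_lt_mul_right this hp.le
    obtain ⟨j, hj, hjn, hΘj⟩ := hlevel (n + 1) (n + 1) (by omega) (by omega)
      (hΘm ▸ mul_le_mul_of_nonneg_right (by exact_mod_cast hnm) hp.le)
    obtain rfl : j = n + 1 := by
      refine le_antisymm hjn (not_lt.1 fun hjn' => ?_)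
      have hle : Θ (lam j) ≤ Θ (lam n) := not_lt.1 fun h => by
        have := (hord n j hn hj).1 h
        omega
      rw [hΘj, ih] at hle
      push_cast at hle
      linarith
    exact hΘj

theorem Real.lipschitzWith_sin_sq : LipschitzWith 1 fun x => sin x ^ 2 := by
  refine lipschitzWith_of_nnnorm_deriv_le (by fun_prop) fun x => ?_
  have hd : deriv (fun x => sin x ^ 2) x = sin (2 * x) := by
    rw [sin_two_mul, ((hasDerivAt_sin x).fun_pow 2).deriv]
    ring
  rw [← NNReal.coe_le_coe, coe_nnnorm, hd, Real.norm_eq_abs, NNReal.coe_one]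
  exact abs_sin_le_one _

/-- The angular equation of the Prüfer substitution `y = r sin θ`, `y' = r cos θ` for the
equation `y'' = (W - c) y`. -/
noncomputable def pruferField (W : ℝ → ℝ) (c t x : ℝ) : ℝ :=
  cos x ^ 2 + (c - W t) * sin x ^ 2

section pruferField

variable {W : ℝ → ℝ} {M : ℝ≥0} {c t x : ℝ}

theorem pruferField_int_mul_pi (k : ℤ) : pruferField W c t (k * π) = 1 := by
  simp [pruferField, sin_int_mul_pi, cos_sq']

theorem pruferField_pi_div_two : pruferField W c t (π / 2) = c - W t := by
  simp [pruferField]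

theorem pruferField_sub_pruferField (c c' : ℝ) :
    pruferField W c' t x - pruferField W c t x = (c' - c) * sin x ^ 2 := by
  unfold pruferField
  ring

theorem pruferField_mono {c c' : ℝ} (hcc : c ≤ c') : pruferField W c t x ≤ pruferField W c' t x :=
  sub_nonneg.1 <| (pruferField_sub_pruferField c c').symm ▸
    mul_nonneg (sub_nonneg.2 hcc) (sq_nonneg _)

theorem lipschitzWith_pruferField (hM : ∀ t, |W t| ≤ M) (c t : ℝ) :
    LipschitzWith (1 + ‖c‖₊ + M) (pruferField W c t) := by
  refine LipschitzWith.of_dist_le_mul fun x y => ?_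
  have hxy : pruferField W c t x - pruferField W c t y =
      (c - W t - 1) * (sin x ^ 2 - sin y ^ 2) := by
    simp only [pruferField, cos_sq']
    ring
  have := Real.lipschitzWith_sin_sq.dist_le_mul x y
  simp only [Real.dist_eq, NNReal.coe_one, one_mul] at this ⊢
  rw [hxy, abs_mul]
  have hcW : |c - W t - 1| ≤ 1 + ‖c‖₊ + M := by
    have := abs_sub (c - W t) 1
    have := abs_sub c (W t)
    simp only [coe_nnnorm, Real.norm_eq_abs, abs_one] at *
    linarith [hM t]
  push_cast
  exact mul_le_mul hcW this (abs_nonneg _) (by positivity)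

theorem abs_pruferField_le (hM : ∀ t, |W t| ≤ M) (c t x : ℝ) :
    |pruferField W c t x| ≤ 1 + ‖c‖₊ + M := by
  have hcW : |c - W t| ≤ ‖c‖₊ + M := by
    have := abs_sub c (W t)
    simp only [coe_nnnorm, Real.norm_eq_abs]
    linarith [hM t]
  calc |pruferField W c t x| ≤ cos x ^ 2 + |c - W t| * sin x ^ 2 := by
        refine (abs_add_le _ _).trans_eq ?_
        rw [abs_mul, abs_of_nonneg (sq_nonneg (cos x)), abs_of_nonneg (sq_nonneg (sin x))]
    _ ≤ (1 + ‖c‖₊ + M) * cos x ^ 2 + (1 + ‖c‖₊ + M) * sin x ^ 2 := by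
        gcongr
        · exact le_mul_of_one_le_left (sq_nonneg _) (by simp [add_assoc]; positivity)
        · linarith
    _ = 1 + ‖c‖₊ + M := by rw [← mul_add, cos_sq_add_sin_sq, mul_one]

end pruferField

section pruferAngle

variable {W : ℝ → ℝ} {M : ℝ≥0} {c : ℝ} {θ : ℝ → ℝ}

theorem exists_pruferAngle (hW : Continuous W) (hM : ∀ t, |W t| ≤ M) (c : ℝ) :
    ∃ θ : ℝ → ℝ, θ 0 = 0 ∧ IsIntegralCurve θ (pruferField W c) :=
  exists_isIntegralCurve_of_lipschitzWith (lipschitzWith_pruferField hM c)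
    (fun x => by unfold pruferField; fun_prop) (C := 1 + ‖c‖₊ + M)
    (fun t x => by simpa using abs_pruferField_le hM c t x) 0 0

theorem pruferAngle_int_mul_pi_lt (hθ : IsIntegralCurve θ (pruferField W c)) (k : ℤ) {s t : ℝ}
    (hs : k * π ≤ θ s) (hst : s < t) : k * π < θ t := by
  -- `θ` can only cross the level `k π` upwards, since `θ' = 1` there
  have hge : ∀ u ∈ Icc s t, k * π ≤ θ u :=
    image_le_of_deriv_right_lt_deriv_boundary (f' := fun _ => 0) continuousOn_const
      (fun u _ => hasDerivWithinAt_const _ _ _) hs hθ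
      (fun u _ hu => by simp [← hu, pruferField_int_mul_pi])
  refine (hge t ⟨hst.le, le_rfl⟩).lt_of_ne fun hkt => ?_
  have hd : HasDerivAt θ 1 t := by simpa [← hkt, pruferField_int_mul_pi] using hθ t
  obtain ⟨u, hu, hus⟩ := ((hd.eventually_nhdsLT_lt one_pos).and (Ioo_mem_nhdsLT hst)).exists
  exact (hge u (Ioo_subset_Icc_self hus)).not_gt (hkt ▸ hu)

theorem pruferAngle_pos (hθ : IsIntegralCurve θ (pruferField W c)) (hθ0 : θ 0 = 0) {t : ℝ}
    (ht : 0 < t) : 0 < θ t := by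
  simpa using pruferAngle_int_mul_pi_lt hθ 0 (by simp [hθ0]) ht

theorem pruferAngle_eq_of_eq_int_mul_pi (hθ : IsIntegralCurve θ (pruferField W c)) {k : ℤ}
    {s t : ℝ} (hs : θ s = k * π) (ht : θ t = k * π) : s = t := by
  rcases lt_trichotomy s t with hst | hst | hst
  · exact absurd ht (pruferAngle_int_mul_pi_lt hθ k hs.ge hst).ne'
  · exact hst
  · exact absurd hs (pruferAngle_int_mul_pi_lt hθ k ht.ge hst).ne'

theorem eventually_pruferAngle_mem_Ioo (hθ : IsIntegralCurve θ (pruferField W c))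
    (hθ0 : θ 0 = 0) : ∀ᶠ u in 𝓝[>] 0, θ u ∈ Ioo 0 π := by
  have hlt : ∀ᶠ u in 𝓝 0, θ u < π :=
    hθ.continuous.continuousAt.eventually_lt continuousAt_const (by rw [hθ0]; exact pi_pos)
  filter_upwards [self_mem_nhdsWithin, nhdsWithin_le_nhds hlt] with u hu hu'
  exact ⟨pruferAngle_pos hθ hθ0 hu, hu'⟩

theorem pruferAngle_le_pi_div_two (hθ : IsIntegralCurve θ (pruferField W c))
    (hc : ∀ t, c < W t) {a t : ℝ} (ha : θ a ≤ π / 2) (hat : a ≤ t) : θ t ≤ π / 2 :=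
  image_le_of_deriv_right_lt_deriv_boundary (B' := fun _ => 0) hθ.continuous.continuousOn
    (fun u _ => (hθ u).hasDerivWithinAt) ha (fun _ => hasDerivAt_const _ _)
    (fun u _ hu => by simpa [hu, pruferField_pi_div_two] using hc u) ⟨hat, le_rfl⟩

theorem exists_mem_Ioo_pruferAngle_eq_nat_mul_pi (hθ : IsIntegralCurve θ (pruferField W c))
    (hθ0 : θ 0 = 0) {L : ℝ} (hL : 0 ≤ L) {k m : ℕ} (hm : θ L = m * π) (hk : 1 ≤ k)
    (hkm : k < m) : ∃ x ∈ Ioo 0 L, θ x = k * π := by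
  have hk' : (1 : ℝ) ≤ k := by exact_mod_cast hk
  have hkm' : (k : ℝ) < m := by exact_mod_cast hkm
  obtain ⟨x, hx, hθx⟩ := intermediate_value_Icc hL hθ.continuous.continuousOn
    (show (k : ℝ) * π ∈ Icc (θ 0) (θ L) from
      ⟨by rw [hθ0]; positivity, by rw [hm]; nlinarith [pi_pos]⟩)
  refine ⟨x, ⟨hx.1.lt_of_ne ?_, hx.2.lt_of_ne ?_⟩, hθx⟩ <;> rintro rfl
  · rw [hθ0] at hθx
    nlinarith [pi_pos]
  · rw [hm] at hθx
    exact hkm'.ne' (mul_right_cancel₀ pi_ne_zero hθx)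

theorem ncard_setOf_sin_pruferAngle_eq_zero (hθ : IsIntegralCurve θ (pruferField W c))
    (hθ0 : θ 0 = 0) {L : ℝ} {m : ℕ} (hm : θ L = m * π) :
    {x ∈ Ioo 0 L | sin (θ x) = 0}.ncard = m - 1 := by
  have hL : 0 ≤ L := not_lt.1 fun hL => by
    simpa [hθ0] using pruferAngle_int_mul_pi_lt hθ 0 (by simp [hm]; positivity) hL
  have hlevel : ∀ k ∈ Icc 1 (m - 1), ∃ x ∈ Ioo 0 L, θ x = k * π := fun k ⟨hk1, hkm⟩ =>
    exists_mem_Ioo_pruferAngle_eq_nat_mul_pi hθ hθ0 hL hm hk1 (by omega)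
  choose ζ hζ using hlevel
  calc {x ∈ Ioo 0 L | sin (θ x) = 0}.ncard = (Icc 1 (m - 1)).ncard := by
        symm
        refine ncard_congr ζ (fun k hk => ⟨(hζ k hk).1, ?_⟩) (fun a b ha hb hab => ?_)
          (fun x hx => ?_)
        · rw [(hζ k hk).2]
          exact sin_nat_mul_pi k
        · have := (hζ a ha).2
          rw [hab, (hζ b hb).2] at this
          exact_mod_cast (mul_right_cancel₀ pi_ne_zero this).symm
        · obtain ⟨j, hj1, hj⟩ :=
            Real.exists_nat_eq_mul_pi_of_sin_eq_zero hx.2 (pruferAngle_pos hθ hθ0 hx.1.1)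
          have hjm : j < m := by
            have : θ x < m * π := not_le.1 fun h => (pruferAngle_int_mul_pi_lt hθ m
              (by exact_mod_cast h) hx.1.2).ne (by exact_mod_cast hm.symm)
            exact_mod_cast lt_of_mul_lt_mul_right (hj ▸ this) pi_pos.le
          have hjI : j ∈ Icc 1 (m - 1) := ⟨hj1, by omega⟩
          exact ⟨j, hjI, pruferAngle_eq_of_eq_int_mul_pi hθ (k := j) (by simpa using (hζ j hjI).2)
            (by simpa using hj)⟩
    _ = m - 1 := by simp

theorem pruferAngle_mono (hM : ∀ t, |W t| ≤ M) {c' : ℝ} {θ' : ℝ → ℝ}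
    (hθ : IsIntegralCurve θ (pruferField W c)) (hθ' : IsIntegralCurve θ' (pruferField W c'))
    (hcc : c ≤ c') {a t : ℝ} (ha : θ a ≤ θ' a) (hat : a ≤ t) : θ t ≤ θ' t :=
  ODE_subsolution_le_supersolution (fun u _ => lipschitzWith_pruferField hM c' u)
    hθ.continuous.continuousOn (fun u _ => (hθ u).hasDerivWithinAt)
    hθ'.continuous.continuousOn (fun u _ => (hθ' u).hasDerivWithinAt)
    (fun _ _ => pruferField_mono hcc) (fun _ _ => le_rfl) ha t ⟨hat, le_rfl⟩

theorem pruferAngle_strictMono (hM : ∀ t, |W t| ≤ M) {c' : ℝ} {θ' : ℝ → ℝ}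
    (hθ : IsIntegralCurve θ (pruferField W c)) (hθ0 : θ 0 = 0)
    (hθ' : IsIntegralCurve θ' (pruferField W c')) (hθ0' : θ' 0 = 0)
    (hcc : c < c') {t : ℝ} (ht : 0 < t) : θ t < θ' t := by
  set K : ℝ := ((1 + ‖c'‖₊ + M : ℝ≥0) : ℝ)
  set d : ℝ → ℝ := fun u => θ' u - θ u
  set F : ℝ → ℝ := fun u => pruferField W c' u (θ' u) - pruferField W c u (θ u)
  -- `d' ≥ (c' - c) sin² θ - K d`, so `exp (K u) d u` is monotone, and increases where `sin θ ≠ 0`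
  set h : ℝ → ℝ := fun u => exp (K * u) * d u
  have hh : ∀ u, HasDerivAt h (exp (K * u) * (F u + K * d u)) u := fun u => by
    refine (((hasDerivAt_id u).const_mul K).exp.fun_mul
      ((hθ' u).fun_sub (hθ u))).congr_deriv ?_
    simp only [F, d, id]
    ring
  have hF : ∀ u, 0 ≤ u → (c' - c) * sin (θ u) ^ 2 ≤ F u + K * d u := fun u hu => by
    have hd : 0 ≤ d u := sub_nonneg.2 (pruferAngle_mono hM hθ hθ' hcc.le (by rw [hθ0, hθ0']) hu)
    have hlip := (lipschitzWith_pruferField hM c' u).dist_le_mul (θ' u) (θ u)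
    rw [Real.dist_eq, Real.dist_eq, abs_of_nonneg hd] at hlip
    have := pruferField_sub_pruferField (W := W) (t := u) (x := θ u) c c'
    simp only [F]
    linarith [neg_abs_le (pruferField W c' u (θ' u) - pruferField W c' u (θ u))]
  have hmono : MonotoneOn h (Icc 0 t) := by
    refine monotoneOn_of_hasDerivWithinAt_nonneg (convex_Icc 0 t)
      (HasDerivAt.continuousOn fun u _ => hh u) (fun u _ => (hh u).hasDerivWithinAt)
      fun u hu => ?_
    rw [interior_Icc] at hu
    exact mul_nonneg (exp_pos _).le
      ((mul_nonneg (sub_nonneg.2 hcc.le) (sq_nonneg _)).trans (hF u hu.1.le))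
  obtain ⟨u, huπ, hu0, hut⟩ :=
    ((eventually_pruferAngle_mem_Ioo hθ hθ0).and (Ioo_mem_nhdsGT ht)).exists
  have hpos : 0 < exp (K * u) * (F u + K * d u) :=
    mul_pos (exp_pos _) ((mul_pos (sub_pos.2 hcc)
      (pow_pos (sin_pos_of_pos_of_lt_pi huπ.1 huπ.2) 2)).trans_le (hF u hu0.le))
  obtain ⟨s, hs, hsu⟩ := (((hh u).eventually_nhdsLT_lt hpos).and (Ioo_mem_nhdsLT hu0)).exists
  have hht : 0 < h t := calc
    0 = h 0 := by simp [h, d, hθ0, hθ0']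
    _ ≤ h s := hmono ⟨le_rfl, ht.le⟩ ⟨hsu.1.le, (hsu.2.trans hut).le⟩ hsu.1.le
    _ < h u := hs
    _ ≤ h t := hmono ⟨hu0.le, hut.le⟩ ⟨ht.le, le_rfl⟩ hut.le
  exact sub_pos.1 (pos_of_mul_pos_right hht (exp_pos _).le)

theorem continuous_pruferAngle_apply (hM : ∀ t, |W t| ≤ M) {θ : ℝ → ℝ → ℝ}
    (hθ : ∀ c, IsIntegralCurve (θ c) (pruferField W c)) (hθ0 : ∀ c, θ c 0 = 0) {t : ℝ}
    (ht : 0 ≤ t) : Continuous fun c => θ c t := by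
  refine continuous_iff_continuousAt.2 fun c₀ => tendsto_iff_dist_tendsto_zero.2 ?_
  -- Grönwall: `θ c` is an approximate solution of the equation for `c₀`, up to `|c - c₀|`
  have hbound : ∀ c, dist (θ c t) (θ c₀ t) ≤ gronwallBound 0 (1 + ‖c₀‖₊ + M) (dist c c₀) t := by
    intro c
    have happrox : ∀ u, dist (pruferField W c u (θ c u)) (pruferField W c₀ u (θ c u)) ≤
        dist c c₀ := fun u => by
      rw [Real.dist_eq, pruferField_sub_pruferField, abs_mul, Real.dist_eq,
        abs_of_nonneg (sq_nonneg (sin (θ c u)))]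
      exact mul_le_of_le_one_right (abs_nonneg _) (sin_sq_le_one _)
    simpa using dist_le_of_approx_trajectories_ODE (lipschitzWith_pruferField hM c₀)
      (hθ c).continuous.continuousOn (fun u _ => (hθ c u).hasDerivWithinAt)
      (fun u _ => happrox u) (hθ c₀).continuous.continuousOn
      (fun u _ => (hθ c₀ u).hasDerivWithinAt) (fun u _ => (dist_self _).le)
      (by rw [hθ0, hθ0, dist_self]) t ⟨ht, le_rfl⟩
  have hlim : Tendsto (fun c => gronwallBound 0 (1 + ‖c₀‖₊ + M) (dist c c₀) t) (𝓝 c₀) (𝓝 0) := by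
    have := ((gronwallBound_continuous_ε 0 (1 + ‖c₀‖₊ + M) t).tendsto 0).comp
      (tendsto_iff_dist_tendsto_zero.1 (tendsto_id (x := 𝓝 c₀)))
    simpa [Function.comp_def, gronwallBound_ε0_δ0] using this
  exact squeeze_zero (fun _ => dist_nonneg) hbound hlim

end pruferAngle

section pruferSolution

variable {W : ℝ → ℝ} {c : ℝ} {θ : ℝ → ℝ}

theorem exists_pruferSolution (hW : Continuous W) (hθ : IsIntegralCurve θ (pruferField W c))
    (hθ0 : θ 0 = 0) :
    ∃ y : ℝ → ℝ, ContDiff ℝ 2 y ∧ (∀ t, deriv (deriv y) t = (W t - c) * y t) ∧ y 0 = 0 ∧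
      deriv y 0 = 1 ∧ ∀ t, y t = 0 ↔ sin (θ t) = 0 := by
  -- `y = exp ρ * sin θ` and `y' = exp ρ * cos θ`, where `ρ` is the logarithm of the amplitude
  set ρ : ℝ → ℝ := fun t => ∫ s in (0 : ℝ)..t, (1 + W s - c) * sin (θ s) * cos (θ s)
  have hρ : ∀ t, HasDerivAt ρ ((1 + W t - c) * sin (θ t) * cos (θ t)) t := fun t => by
    have := hθ.continuous
    have hcont : Continuous fun s => (1 + W s - c) * sin (θ s) * cos (θ s) := by fun_prop
    exact (hcont.integral_hasStrictDerivAt 0 t).hasDerivAt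
  set y : ℝ → ℝ := fun t => exp (ρ t) * sin (θ t)
  set z : ℝ → ℝ := fun t => exp (ρ t) * cos (θ t)
  have hy : ∀ t, HasDerivAt y (z t) t := fun t => by
    refine ((hρ t).exp.mul (hθ t).sin).congr_deriv ?_
    simp only [z, pruferField]
    linear_combination exp (ρ t) * cos (θ t) * sin_sq_add_cos_sq (θ t)
  have hz : ∀ t, HasDerivAt z ((W t - c) * y t) t := fun t => by
    refine ((hρ t).exp.mul (hθ t).cos).congr_deriv ?_
    simp only [y, pruferField]
    linear_combination (W t - c) * exp (ρ t) * sin (θ t) * sin_sq_add_cos_sq (θ t)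
  have hy' : deriv y = z := funext fun t => (hy t).deriv
  have hz' : deriv z = fun t => (W t - c) * y t := funext fun t => (hz t).deriv
  have hρ0 : ρ 0 = 0 := intervalIntegral.integral_same
  refine ⟨y, ?_, fun t => by rw [hy', hz'], by simp [y, hρ0, hθ0], by simp [hy', z, hρ0, hθ0],
    fun t => by simp [y, exp_ne_zero]⟩
  rw [show (2 : WithTop ℕ∞) = 1 + 1 by norm_num, contDiff_succ_iff_deriv, hy',
    contDiff_one_iff_deriv, hz']
  have := hθ.continuous
  exact ⟨fun t => (hy t).differentiableAt, by simp, fun t => (hz t).differentiableAt, by fun_prop⟩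

end pruferSolution

section DirichletEigenfunction

variable {L : ℝ} {V W : ℝ → ℝ} {μ : ℝ} {f : ℝ → ℝ}

theorem DirichletEigenfunction.eqOn_deriv_mul (hV : ContinuousOn V (Icc 0 L))
    (hf : DirichletEigenfunction L V μ f) {y : ℝ → ℝ} (hy2 : ContDiff ℝ 2 y)
    (hy : ∀ t ∈ Icc 0 L, deriv (deriv y) t = (V t - μ) * y t) (hy0 : y 0 = 0)
    (hy0' : deriv y 0 = 1) :
    deriv f 0 ≠ 0 ∧ EqOn f (fun x => deriv f 0 * y x) (Icc 0 L) := by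
  obtain ⟨hf2, hfeq, hf0, -, x₀, hx₀, hfx₀⟩ := hf
  have hfy : EqOn f (fun x => deriv f 0 * y x) (Icc 0 L) := by
    refine eqOn_of_deriv_deriv_eq_mul (q := fun t => V t - μ) (hV.sub continuousOn_const) hf2
      (contDiff_const.mul hy2) (fun x hx => by linarith [hfeq x hx]) (fun x hx => ?_)
      (by simp [hf0, hy0]) (by simp [hy0'])
    simp only [deriv_const_mul_field', hy x hx]
    ring
  refine ⟨fun hd => hfx₀ ?_, hfy⟩
  simpa [hd] using hfy hx₀

variable {θ : ℝ → ℝ}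

theorem DirichletEigenfunction.eq_zero_iff_sin_pruferAngle (hV : ContinuousOn V (Icc 0 L))
    (hW : Continuous W) (hWV : EqOn W V (Icc 0 L)) (hθ : IsIntegralCurve θ (pruferField W μ))
    (hθ0 : θ 0 = 0) (hf : DirichletEigenfunction L V μ f) {x : ℝ} (hx : x ∈ Icc 0 L) :
    f x = 0 ↔ sin (θ x) = 0 := by
  obtain ⟨y, hy2, hy, hy0, hy0', hyθ⟩ := exists_pruferSolution hW hθ hθ0
  obtain ⟨hd, hfy⟩ := hf.eqOn_deriv_mul hV hy2 (fun t ht => hWV ht ▸ hy t) hy0 hy0'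
  rw [hfy hx, mul_eq_zero, or_iff_right hd, hyθ]

theorem exists_dirichletEigenfunction_iff (hL : 0 < L) (hV : ContinuousOn V (Icc 0 L))
    (hW : Continuous W) (hWV : EqOn W V (Icc 0 L)) (hθ : IsIntegralCurve θ (pruferField W μ))
    (hθ0 : θ 0 = 0) :
    (∃ f, DirichletEigenfunction L V μ f) ↔ ∃ m : ℕ, 1 ≤ m ∧ θ L = m * π := by
  constructor
  · rintro ⟨f, hf⟩
    have hsin := (hf.eq_zero_iff_sin_pruferAngle hV hW hWV hθ hθ0 ⟨hL.le, le_rfl⟩).1 hf.2.2.2.1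
    exact Real.exists_nat_eq_mul_pi_of_sin_eq_zero hsin (pruferAngle_pos hθ hθ0 hL)
  · rintro ⟨m, -, hm⟩
    obtain ⟨y, hy2, hy, hy0, -, hyθ⟩ := exists_pruferSolution hW hθ hθ0
    obtain ⟨x, hxπ, hx0, hxL⟩ :=
      ((eventually_pruferAngle_mem_Ioo hθ hθ0).and (Ioo_mem_nhdsGT hL)).exists
    refine ⟨y, hy2, fun t ht => by rw [hy t, hWV ht]; ring, hy0,
      (hyθ L).2 (by rw [hm]; exact sin_nat_mul_pi m), x, ⟨hx0.le, hxL.le⟩, fun hyx => ?_⟩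
    exact (sin_pos_of_pos_of_lt_pi hxπ.1 hxπ.2).ne' ((hyθ x).1 hyx)

end DirichletEigenfunction

/-- Sturm oscillation theorem: if `lam n` (for `n ≥ 1`) enumerates in increasing
order all the eigenvalues of `-f'' + V f = λ f` on `[0, L]` with Dirichlet boundary
conditions, then an eigenfunction of the `n`-th eigenvalue has exactly `n - 1` zeros
in the open interval `(0, L)`. -/
theorem stmt_17 (L : ℝ) (hL : 0 < L) (V : ℝ → ℝ) (hV : ContinuousOn V (Icc 0 L))
    (lam : ℕ → ℝ)
    (hmono : ∀ m n : ℕ, 1 ≤ m → m < n → lam m < lam n)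
    (hev : ∀ n : ℕ, 1 ≤ n → ∃ f, DirichletEigenfunction L V (lam n) f)
    (hall : ∀ μ : ℝ, (∃ f, DirichletEigenfunction L V μ f) →
      ∃ n : ℕ, 1 ≤ n ∧ lam n = μ)
    (n : ℕ) (hn : 1 ≤ n) (f : ℝ → ℝ)
    (hf : DirichletEigenfunction L V (lam n) f) :
    {x ∈ Ioo 0 L | f x = 0}.ncard = n - 1 := by
  obtain ⟨W, hW, hWV, M, hM⟩ := hV.exists_continuous_extension_of_Icc hL.le
  choose θ hθ0 hθ using exists_pruferAngle hW hM
  have hspec (μ : ℝ) : (∃ f, DirichletEigenfunction L V μ f) ↔ ∃ m : ℕ, 1 ≤ m ∧ θ μ L = m * π :=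
    exists_dirichletEigenfunction_iff hL hV hW hWV (hθ μ) (hθ0 μ)
  have hlow : θ (-M - 1) L < π := by
    have hπ : π / 2 < π := by linarith [pi_pos]
    have hc : ∀ t, -M - 1 < W t := fun t => by linarith [neg_abs_le (W t), hM t]
    exact (pruferAngle_le_pi_div_two (hθ _) hc (by rw [hθ0]; positivity) hL.le).trans_lt hπ
  have hθn : θ (lam n) L = n * π :=
    StrictMono.apply_eq_nat_mul_of_enumerates (Θ := fun c => θ c L) pi_pos
      (fun c c' hcc => pruferAngle_strictMono hM (hθ c) (hθ0 c) (hθ c') (hθ0 c') hcc hL)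
      (continuous_pruferAngle_apply hM hθ hθ0 hL.le) ⟨_, hlow⟩ hmono
      (fun n hn => (hspec _).1 (hev n hn)) (fun c hc => hall c ((hspec c).2 hc)) hn
  have hzeros : {x ∈ Ioo 0 L | f x = 0} = {x ∈ Ioo 0 L | sin (θ (lam n) x) = 0} :=
    Set.ext fun x => and_congr_right fun hx => hf.eq_zero_iff_sin_pruferAngle hV hW hWV
      (hθ _) (hθ0 _) (Ioo_subset_Icc_self hx)
  rw [hzeros]
  exact ncard_setOf_sin_pruferAngle_eq_zero (hθ _) (hθ0 _) hθn
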